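/- arXiv:2306.11659 — 5 statements merged into one kernel-verified Lean document; each statement's English description precedes it below -/
import Mathlib

section
/- For Boolean subalgebras A and B of a Boolean algebra C, if there exist nonzero a ∈ A and b ∈ B with a ⊓ b = 0, then A and B are not subalgebra-independent: there exist Boolean homomorphisms α : A → A and β : B → B with no joint extension to the subalgebra generated by A ∪ B. -/
/-- A Boolean subalgebra of a Boolean algebra `C`: a subset closed under the Boolean
operations and containing `⊥` and `⊤`. -/
structure BoolSubalg (C : Type*) [BooleanAlgebra C] where
  carrier : Set C
  sup_mem : ∀ {a b : C}, a ∈ carrier → b ∈ carrier → a ⊔ b ∈ carrier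
  inf_mem : ∀ {a b : C}, a ∈ carrier → b ∈ carrier → a ⊓ b ∈ carrier
  compl_mem : ∀ {a : C}, a ∈ carrier → aᶜ ∈ carrier
  bot_mem : ⊥ ∈ carrier
  top_mem : ⊤ ∈ carrier

variable {C : Type*} [BooleanAlgebra C]

/-- `f` is a Boolean homomorphism from the subalgebra `S` to the subalgebra `T`
(as a map on the carrier of `S`, with values in `C` landing in the carrier of `T`). -/
def IsBoolHom (S T : BoolSubalg C) (f : S.carrier → C) : Prop :=
  (∀ x, f x ∈ T.carrier) ∧
  (∀ x y : S.carrier, f ⟨↑x ⊔ ↑y, S.sup_mem x.2 y.2⟩ = f x ⊔ f y) ∧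
  (∀ x y : S.carrier, f ⟨↑x ⊓ ↑y, S.inf_mem x.2 y.2⟩ = f x ⊓ f y) ∧
  (∀ x : S.carrier, f ⟨(↑x)ᶜ, S.compl_mem x.2⟩ = (f x)ᶜ) ∧
  f ⟨⊥, S.bot_mem⟩ = ⊥ ∧ f ⟨⊤, S.top_mem⟩ = ⊤

/-- The Boolean subalgebra generated by a subset `s` of `C`. -/
def genBoolSubalg (s : Set C) : BoolSubalg C where
  carrier := {x | ∀ T : BoolSubalg C, s ⊆ T.carrier → x ∈ T.carrier}
  sup_mem := fun ha hb T hT => T.sup_mem (ha T hT) (hb T hT)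
  inf_mem := fun ha hb T hT => T.inf_mem (ha T hT) (hb T hT)
  compl_mem := fun ha T hT => T.compl_mem (ha T hT)
  bot_mem := fun T _ => T.bot_mem
  top_mem := fun T _ => T.top_mem

theorem subset_genBoolSubalg (s : Set C) : s ⊆ (genBoolSubalg s).carrier :=
  fun _ hx _ hT => hT hx

/-!
A prime ideal `J` of `C` gives a two-valued homomorphism `x ↦ if x ∈ J then ⊥ else ⊤`, which
restricts to an endomorphism of every subalgebra. Choose prime ideals `J ∌ a` and `K ∌ b`, and
let `α`, `β` be the corresponding homomorphisms of `A` and `B`. A common extension `γ` would send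
both `a` and `b` to `⊤`, yet preserve their disjointness, so `⊤ = ⊥`, contradicting `a ≠ ⊥`.
-/

theorem Order.Ideal.exists_isPrime_notMem {P : Type*} [DistribLattice P] [OrderBot P] {c : P}
    (hc : c ≠ ⊥) : ∃ J : Order.Ideal P, J.IsPrime ∧ c ∉ J := by
  have hdisj : Disjoint (Order.PFilter.principal c : Set P)
      ((Order.Ideal.principal ⊥ : Order.Ideal P) : Set P) :=
    Set.disjoint_left.2 fun x hcx hx => hc <| le_bot_iff.1 <|
      (Order.PFilter.mem_principal.1 hcx).trans (Order.Ideal.mem_principal.1 hx :)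
  obtain ⟨J, hJ, -, hJc⟩ := DistribLattice.prime_ideal_of_disjoint_filter_ideal hdisj
  exact ⟨J, hJ, Set.disjoint_left.1 hJc (Order.PFilter.mem_principal.2 le_rfl)⟩

namespace Order.Ideal.IsPrime

variable {P : Type*} [Lattice P] {J : Order.Ideal P}

theorem inf_mem_iff (hJ : J.IsPrime) {x y : P} : x ⊓ y ∈ J ↔ x ∈ J ∨ y ∈ J :=
  ⟨hJ.mem_or_mem, fun h => h.elim (J.lower inf_le_left) (J.lower inf_le_right)⟩

variable [BoundedOrder P] (β : Type*) [Lattice β] [BoundedOrder β]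

open Classical in
noncomputable def indicator (hJ : J.IsPrime) : BoundedLatticeHom P β where
  toFun x := if x ∈ J then ⊥ else ⊤
  map_sup' x y := by
    by_cases hx : x ∈ J <;> by_cases hy : y ∈ J <;> simp [hx, hy, Order.Ideal.sup_mem_iff]
  map_inf' x y := by
    by_cases hx : x ∈ J <;> by_cases hy : y ∈ J <;> simp [hx, hy, hJ.inf_mem_iff]
  map_top' := by simp [hJ.top_notMem]
  map_bot' := by simp

variable {β}

open Classical in
theorem indicator_apply (hJ : J.IsPrime) (x : P) :
    hJ.indicator β x = if x ∈ J then ⊥ else ⊤ :=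
  rfl

theorem indicator_apply_of_notMem (hJ : J.IsPrime) {x : P} (hx : x ∉ J) :
    hJ.indicator β x = ⊤ :=
  if_neg hx

end Order.Ideal.IsPrime

theorem isBoolHom_of_boundedLatticeHom {S T : BoolSubalg C} (f : BoundedLatticeHom C C)
    (hf : ∀ x ∈ S.carrier, f x ∈ T.carrier) : IsBoolHom S T fun x => f x :=
  ⟨fun x => hf x x.2, fun x y => map_sup f (x : C) y, fun x y => map_inf f (x : C) y,
    fun x => map_compl' f (x : C), map_bot f, map_top f⟩

theorem isBoolHom_indicator (S : BoolSubalg C) {J : Order.Ideal C} (hJ : J.IsPrime) :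
    IsBoolHom S S fun x => hJ.indicator C x :=
  isBoolHom_of_boundedLatticeHom _ fun x _ => by
    rw [hJ.indicator_apply]
    split_ifs
    exacts [S.bot_mem, S.top_mem]

theorem IsBoolHom.disjoint {S T : BoolSubalg C} {f : S.carrier → C} (hf : IsBoolHom S T f)
    {x y : C} (hx : x ∈ S.carrier) (hy : y ∈ S.carrier) (hxy : Disjoint x y) :
    Disjoint (f ⟨x, hx⟩) (f ⟨y, hy⟩) := by
  obtain ⟨-, -, hinf, -, hbot, -⟩ := hf
  rw [disjoint_iff, ← hinf, ← hbot]
  exact congrArg f (Subtype.ext (disjoint_iff.1 hxy))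

/-- If there are nonzero `a ∈ A`, `b ∈ B` with `a ⊓ b = ⊥`, then the Boolean
subalgebras `A` and `B` are not subalgebra-independent: some pair of Boolean homomorphisms
`α : A → A`, `β : B → B` has no joint extension to the subalgebra generated by `A ∪ B`. -/
theorem boolean_not_independent_of_meet_eq_bot (A B : BoolSubalg C)
    (a b : C) (ha : a ∈ A.carrier) (hb : b ∈ B.carrier)
    (ha0 : a ≠ ⊥) (hb0 : b ≠ ⊥) (hab : a ⊓ b = ⊥) :
    ∃ (α : A.carrier → C) (β : B.carrier → C),
      IsBoolHom A A α ∧ IsBoolHom B B β ∧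
      ¬ ∃ γ : (genBoolSubalg (A.carrier ∪ B.carrier)).carrier → C,
          IsBoolHom (genBoolSubalg (A.carrier ∪ B.carrier))
            (genBoolSubalg (A.carrier ∪ B.carrier)) γ ∧
          (∀ (x : C) (hx : x ∈ A.carrier),
            γ ⟨x, subset_genBoolSubalg _ (Or.inl hx)⟩ = α ⟨x, hx⟩) ∧
          (∀ (x : C) (hx : x ∈ B.carrier),
            γ ⟨x, subset_genBoolSubalg _ (Or.inr hx)⟩ = β ⟨x, hx⟩) := by
  obtain ⟨J, hJ, haJ⟩ := Order.Ideal.exists_isPrime_notMem ha0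
  obtain ⟨K, hK, hbK⟩ := Order.Ideal.exists_isPrime_notMem hb0
  refine ⟨fun x => hJ.indicator C x, fun x => hK.indicator C x,
    isBoolHom_indicator A hJ, isBoolHom_indicator B hK, ?_⟩
  rintro ⟨γ, hγ, hγA, hγB⟩
  have hγa := (hγA a ha).trans (hJ.indicator_apply_of_notMem haJ)
  have hγb := (hγB b hb).trans (hK.indicator_apply_of_notMem hbK)
  have hdisj := hγ.disjoint (subset_genBoolSubalg _ (Or.inl ha))
    (subset_genBoolSubalg _ (Or.inr hb)) (disjoint_iff.2 hab)
  rw [hγa, hγb, disjoint_self] at hdisj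
  exact ha0 (eq_bot_mono le_top hdisj)
end

section
/- For subgroups A and B of a commutative group C, the pair (A, B) is subgroup-independent (every pair of group homomorphisms α : A → A, β : B → B has a common extension to a group homomorphism γ : A ⊔ B → A ⊔ B) if and only if A ∩ B = {e}. -/
/-- For subgroups `A`, `B` of a commutative group `C`, subgroup-independence
(every pair of homomorphisms `α : A → A`, `β : B → B` has a common extension to a
homomorphism `γ : A ⊔ B → A ⊔ B`) holds iff `A ∩ B = {e}`. -/
theorem abelian_subgroup_independent_iff {C : Type*} [CommGroup C] (A B : Subgroup C) :
    (∀ (α : A →* A) (β : B →* B), ∃ γ : ↥(A ⊔ B) →* ↥(A ⊔ B),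
      (∀ (a : C) (ha : a ∈ A),
        (γ ⟨a, Subgroup.mem_sup_left ha⟩ : C) = (α ⟨a, ha⟩ : C)) ∧
      (∀ (b : C) (hb : b ∈ B),
        (γ ⟨b, Subgroup.mem_sup_right hb⟩ : C) = (β ⟨b, hb⟩ : C))) ↔
    A ⊓ B = ⊥ := by
  constructor
  · intro h
    rw [eq_bot_iff]
    intro x hx
    obtain ⟨γ, hA, hB⟩ := h (MonoidHom.id A) 1
    have h1 := hA x hx.1
    have h2 := hB x hx.2
    simp only [MonoidHom.id_apply, MonoidHom.one_apply, OneMemClass.coe_one] at h1 h2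
    rw [Subgroup.mem_bot]
    rw [← h1, h2]
  · intro hAB α β
    let f : A × B →* ↥(A ⊔ B) :=
      (Subgroup.inclusion le_sup_left).coprod (Subgroup.inclusion le_sup_right)
    have hfval : ∀ p : A × B, (f p : C) = (p.1 : C) * (p.2 : C) := by
      intro p; rfl
    have hf : Function.Bijective f := by
      constructor
      · rintro ⟨a, b⟩ ⟨a', b'⟩ hab
        have h : (a : C) * b = (a' : C) * b' := by
          have := congrArg (Subtype.val) hab
          rwa [hfval, hfval] at this
        have hdd : (a : C) / a' = (b' : C) / b :=
          div_eq_div_iff_mul_eq_mul.mpr (by rw [h, mul_comm])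
        have hmem : (a : C) / a' ∈ A ⊓ B := by
          refine Subgroup.mem_inf.mpr ⟨div_mem a.2 a'.2, ?_⟩
          rw [hdd]; exact div_mem b'.2 b.2
        rw [hAB, Subgroup.mem_bot] at hmem
        have ha : (a : C) = a' := div_eq_one.mp hmem
        have hb : (b : C) = b' := by
          rw [ha] at h
          exact mul_left_cancel h
        exact Prod.ext (Subtype.ext ha) (Subtype.ext hb)
      · rintro ⟨x, hx⟩
        obtain ⟨a, ha, b, hb, rfl⟩ := Subgroup.mem_sup.mp hx
        exact ⟨(⟨a, ha⟩, ⟨b, hb⟩), rfl⟩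
    let e := MulEquiv.ofBijective f hf
    refine ⟨f.comp ((α.prodMap β).comp e.symm.toMonoidHom), ?_, ?_⟩
    · intro a ha
      have hsymm : e.symm ⟨a, Subgroup.mem_sup_left ha⟩ = (⟨a, ha⟩, 1) := by
        rw [MulEquiv.symm_apply_eq]
        refine Subtype.ext ?_
        show (a : C) = (f (⟨a, ha⟩, 1) : C)
        rw [hfval]; simp
      show (f ((α.prodMap β) (e.symm ⟨a, Subgroup.mem_sup_left ha⟩)) : C) = _
      rw [hsymm, hfval]
      simp
    · intro b hb
      have hsymm : e.symm ⟨b, Subgroup.mem_sup_right hb⟩ = (1, ⟨b, hb⟩) := by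
        rw [MulEquiv.symm_apply_eq]
        refine Subtype.ext ?_
        show (b : C) = (f (1, ⟨b, hb⟩) : C)
        rw [hfval]; simp
      show (f ((α.prodMap β) (e.symm ⟨b, Subgroup.mem_sup_right hb⟩)) : C) = _
      rw [hsymm, hfval]
      simp
end

section
/- For subgroups A and B of an arbitrary group C, if A and B are subgroup-independent then A ∩ B = {e}. -/
/-- For subgroups `A`, `B` of an arbitrary group `C`, if `A` and `B` are
subgroup-independent then `A ∩ B = {e}`. -/
theorem subgroup_independent_inf_eq_bot {C : Type*} [Group C] (A B : Subgroup C)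
    (hindep : ∀ (α : A →* A) (β : B →* B), ∃ γ : ↥(A ⊔ B) →* ↥(A ⊔ B),
      (∀ (a : C) (ha : a ∈ A),
        (γ ⟨a, Subgroup.mem_sup_left ha⟩ : C) = (α ⟨a, ha⟩ : C)) ∧
      (∀ (b : C) (hb : b ∈ B),
        (γ ⟨b, Subgroup.mem_sup_right hb⟩ : C) = (β ⟨b, hb⟩ : C))) :
    A ⊓ B = ⊥ := by
  obtain ⟨γ, hγA, hγB⟩ := hindep (MonoidHom.id A) 1
  ext x
  simp only [Subgroup.mem_inf, Subgroup.mem_bot]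
  constructor
  · rintro ⟨hxA, hxB⟩
    have h1 := hγA x hxA
    have h2 := hγB x hxB
    simp only [MonoidHom.id_apply] at h1
    simp only [MonoidHom.one_apply, OneMemClass.coe_one] at h2
    rw [h1] at h2
    exact h2
  · rintro rfl
    exact ⟨A.one_mem, B.one_mem⟩
end

section
/- Let G be a group and A, B subgroups of G such that A is normal in the subgroup generated by A ∪ B but B is not normal in that subgroup. Then A and B are not subgroup-independent. -/
theorem Subgroup.exists_not_commute_of_not_normal_subgroupOf_sup {G : Type*} [Group G]
    {A B : Subgroup G} (hB : ¬ (B.subgroupOf (A ⊔ B)).Normal) :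
    ∃ a ∈ A, ∃ b ∈ B, ¬ Commute b a := by
  contrapose! hB
  exact normal_subgroupOf_sup_of_le_normalizer fun a ha ↦
    centralizer_le_normalizer _ (mem_centralizer_iff.mpr fun b hb ↦ hB a ha b hb)

/-- If `A` is normal in the subgroup `J = A ⊔ B` generated by `A ∪ B` but
`B` is not normal in `J`, then `A` and `B` are not subgroup-independent. -/
theorem not_independent_of_normal_not_normal {G : Type*} [Group G] (A B : Subgroup G)
    (hA : (A.subgroupOf (A ⊔ B)).Normal) (hB : ¬ (B.subgroupOf (A ⊔ B)).Normal) :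
    ¬ ∀ (α : A →* A) (β : B →* B), ∃ γ : ↥(A ⊔ B) →* ↥(A ⊔ B),
      (∀ (a : G) (ha : a ∈ A),
        (γ ⟨a, Subgroup.mem_sup_left ha⟩ : G) = (α ⟨a, ha⟩ : G)) ∧
      (∀ (b : G) (hb : b ∈ B),
        (γ ⟨b, Subgroup.mem_sup_right hb⟩ : G) = (β ⟨b, hb⟩ : G)) := by
  intro h
  obtain ⟨a, ha, b, hb, hba⟩ := Subgroup.exists_not_commute_of_not_normal_subgroupOf_sup hB
  obtain ⟨γ, hγA, hγB⟩ := h (MonoidHom.id A) 1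
  let a' : ↥(A ⊔ B) := ⟨a, Subgroup.mem_sup_left ha⟩
  let b' : ↥(A ⊔ B) := ⟨b, Subgroup.mem_sup_right hb⟩
  have hconj : b * a * b⁻¹ ∈ A := Subgroup.mem_subgroupOf.mp (hA.conj_mem a' ha b')
  have hγb : γ b' = 1 := Subtype.ext (hγB b hb)
  -- `γ` fixes the conjugate `b a b⁻¹ ∈ A`, but also sends it to `γ a = a` since it kills `b`.
  have hfix : b * a * b⁻¹ = a := calc
    b * a * b⁻¹ = γ (b' * a' * b'⁻¹) := (hγA _ hconj).symm
    _ = γ a' := by simp [hγb]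
    _ = a := hγA a ha
  exact hba (mul_inv_eq_iff_eq_mul.mp hfix)
end

section
/- Let A and B be monoids and consider them as submonoids of their coproduct (free product) A ⊕ B via the canonical embeddings. For any congruences θ_A on A and θ_B on B there exists a congruence θ on A ⊕ B such that the restriction of θ to A × A (via the embedding) is θ_A and the restriction to B × B is θ_B. -/
open Monoid

/-- For monoids `A`, `B` seen inside their coproduct `A ∗ B` via the
canonical embeddings, any pair of congruences `θ_A` on `A`, `θ_B` on `B` extends jointly:
there is a congruence `θ` on `A ∗ B` restricting to `θ_A` on `A` and to `θ_B` on `B`. -/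
theorem coprod_congruence_joint_extension {A B : Type*} [Monoid A] [Monoid B]
    (θA : Con A) (θB : Con B) :
    ∃ θ : Con (Coprod A B),
      (∀ x y : A, θ (Coprod.inl x) (Coprod.inl y) ↔ θA x y) ∧
      (∀ x y : B, θ (Coprod.inr x) (Coprod.inr y) ↔ θB x y) := by
  let γ : Coprod A B →* Coprod θA.Quotient θB.Quotient :=
    Coprod.lift (Coprod.inl.comp θA.mk') (Coprod.inr.comp θB.mk')
  refine ⟨Con.ker γ, fun x y => ?_, fun x y => ?_⟩
  · show γ (Coprod.inl x) = γ (Coprod.inl y) ↔ _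
    simp only [γ, Coprod.lift_apply_inl, MonoidHom.comp_apply]
    rw [Coprod.inl_injective.eq_iff]
    exact θA.eq
  · show γ (Coprod.inr x) = γ (Coprod.inr y) ↔ _
    simp only [γ, Coprod.lift_apply_inr, MonoidHom.comp_apply]
    rw [Coprod.inr_injective.eq_iff]
    exact θB.eq
end
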